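/- Let H₁, H₂ be finite-dimensional complex Hilbert spaces and U a unitary on H₁ ⊗ H₂ such that for every density matrix ρ and every rank-one projection P on H₁, Tr₁( U (P ⊗ 1) ρ (P ⊗ 1) U† + U ((1−P) ⊗ 1) ρ ((1−P) ⊗ 1) U† ) = Tr₁(U ρ U†). Then U = U₁ ⊗ U₂ for some unitaries U₁, U₂. -/

import Mathlib

/-!
The defect `ρ ↦ Tr₁(U ρ U†) - Tr₁(U (Q ρ Q + Q' ρ Q') U†)` of the no-signalling condition for
`Q = P ⊗ 1`, `Q' = (1 - P) ⊗ 1` is linear and vanishes on density matrices, which span all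
matrices. If `P` projects onto `e` and `f ⊥ e`, both pinched terms of `|e⟩⟨f| ⊗ F` vanish, so
`Tr₁(U (|e⟩⟨f| ⊗ F) U†) = 0`. For the blocks `B_{kl} = (U_{(i,k),(p,l)})_{i,p}` of `U` this reads
`⟨f, B_{k'l'}† B_{kl} e⟩ = 0` whenever `f ⊥ e`, hence every `B_{k'l'}† B_{kl}` is a scalar.
A nonzero block `B₀` rescales to a unitary `W`, and then `B_{kl} = W W† B_{kl}` is a multiple of
`W`, that is `U = W ⊗ V`; the factor `V` is unitary because `U` and `W` are.
-/

open Matrix Kronecker BigOperators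
open scoped ComplexOrder

noncomputable section

/-- Partial trace over the first tensor factor. -/
def ptrace1 {n m : Type} [Fintype n] (ρ : Matrix (n × m) (n × m) ℂ) : Matrix m m ℂ :=
  Matrix.of fun k l => ∑ i, ρ (i, k) (i, l)

/-- A density matrix: positive semidefinite with trace one. -/
def IsDensityMatrix {d : Type} [Fintype d] [DecidableEq d] (ρ : Matrix d d ℂ) : Prop :=
  ρ.PosSemidef ∧ ρ.trace = 1

/-- A complete family of mutually orthogonal Hermitian projections. -/
def IsProjFamily {n ι : Type} [Fintype n] [DecidableEq n] [Fintype ι] [DecidableEq ι]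
    (P : ι → Matrix n n ℂ) : Prop :=
  (∀ i, (P i).IsHermitian) ∧ (∀ i j, P i * P j = if i = j then P i else 0) ∧ ∑ i, P i = 1

/-- `(P, μ)` is the spectral decomposition of the Hermitian operator `A`. -/
def IsSpectralDecomp {n ι : Type} [Fintype n] [DecidableEq n] [Fintype ι] [DecidableEq ι]
    (A : Matrix n n ℂ) (P : ι → Matrix n n ℂ) (μ : ι → ℝ) : Prop :=
  IsProjFamily P ∧ Function.Injective μ ∧ A = ∑ i, (μ i : ℂ) • P i

theorem Matrix.rank_vecMulVec_eq_one {K m n : Type*} [Field K] [Fintype n] [DecidableEq n]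
    {x : m → K} {y : n → K} (hx : x ≠ 0) (hy : y ≠ 0) : (vecMulVec x y).rank = 1 := by
  refine le_antisymm (rank_vecMulVec_le x y) (Nat.one_le_iff_ne_zero.mpr fun h => ?_)
  obtain ⟨j, hj⟩ := Function.ne_iff.mp hy
  have hcol : vecMulVec x y *ᵥ Pi.single j 1 ∈ LinearMap.range (vecMulVec x y).mulVecLin :=
    ⟨_, rfl⟩
  rw [Submodule.finrank_eq_zero.mp h, Submodule.mem_bot, vecMulVec_mulVec] at hcol
  exact hj (by simpa [hx] using hcol)

section

variable {d : Type} [Fintype d] {e : d → ℂ}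

def rankOneProj (e : d → ℂ) : Matrix d d ℂ := (star e ⬝ᵥ e)⁻¹ • vecMulVec e (star e)

lemma rankOneProj_posSemidef (e : d → ℂ) : (rankOneProj e).PosSemidef :=
  (posSemidef_vecMulVec_self_star e).smul (inv_nonneg.mpr (dotProduct_star_self_nonneg e))

lemma isDensityMatrix_rankOneProj [DecidableEq d] (he : e ≠ 0) :
    IsDensityMatrix (rankOneProj e) := by
  refine ⟨rankOneProj_posSemidef e, ?_⟩
  rw [rankOneProj, trace_smul, trace_vecMulVec, dotProduct_comm e, smul_eq_mul,
    inv_mul_cancel₀ (dotProduct_star_self_eq_zero.not.mpr he)]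

lemma rankOneProj_mul_vecMulVec (he : e ≠ 0) (y : d → ℂ) :
    rankOneProj e * vecMulVec e y = vecMulVec e y := by
  rw [rankOneProj, smul_mul_assoc, vecMulVec_mul_vecMulVec, vecMulVec_smul, smul_smul,
    inv_mul_cancel₀ (dotProduct_star_self_eq_zero.not.mpr he), one_smul]

lemma vecMulVec_mul_rankOneProj {f : d → ℂ} (hfe : star f ⬝ᵥ e = 0) (x : d → ℂ) :
    vecMulVec x (star f) * rankOneProj e = 0 := by
  rw [rankOneProj, mul_smul_comm, vecMulVec_mul_vecMulVec, hfe, zero_smul, vecMulVec_zero,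
    smul_zero]

lemma rankOneProj_mul_self (he : e ≠ 0) : rankOneProj e * rankOneProj e = rankOneProj e := by
  nth_rw 2 [rankOneProj]
  rw [mul_smul_comm, rankOneProj_mul_vecMulVec he, rankOneProj]

lemma rank_rankOneProj [DecidableEq d] (he : e ≠ 0) : (rankOneProj e).rank = 1 := by
  rw [rankOneProj, ← smul_vecMulVec]
  refine rank_vecMulVec_eq_one ?_ (star_ne_zero.mpr he)
  exact smul_ne_zero (inv_ne_zero (dotProduct_star_self_eq_zero.not.mpr he)) he

end

lemma vecMulVec_star_polarization {d : Type} (x y : d → ℂ) :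
    (4 : ℂ) • vecMulVec x (star y) =
      vecMulVec (x + y) (star (x + y)) - vecMulVec (x - y) (star (x - y)) +
        Complex.I • vecMulVec (x + Complex.I • y) (star (x + Complex.I • y)) -
        Complex.I • vecMulVec (x - Complex.I • y) (star (x - Complex.I • y)) := by
  ext i j
  simp only [Matrix.smul_apply, Matrix.sub_apply, Matrix.add_apply, vecMulVec_apply,
    Pi.star_apply, Pi.add_apply, Pi.sub_apply, Pi.smul_apply, smul_eq_mul, star_add, star_sub,
    star_mul', Complex.star_def, Complex.conj_I]
  ring_nf
  simp only [Complex.I_sq]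
  ring

theorem LinearMap.eq_zero_of_forall_isDensityMatrix {d : Type} [Fintype d] [DecidableEq d]
    {M : Type*} [AddCommGroup M] [Module ℂ M] (Φ : Matrix d d ℂ →ₗ[ℂ] M)
    (h : ∀ ρ, IsDensityMatrix ρ → Φ ρ = 0) : Φ = 0 := by
  have hpure (x : d → ℂ) : Φ (vecMulVec x (star x)) = 0 := by
    rcases eq_or_ne x 0 with rfl | hx
    · simp
    have : vecMulVec x (star x) = (star x ⬝ᵥ x) • rankOneProj x := by
      rw [rankOneProj, smul_smul, mul_inv_cancel₀ (dotProduct_star_self_eq_zero.not.mpr hx),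
        one_smul]
    rw [this, map_smul, h _ (isDensityMatrix_rankOneProj hx), smul_zero]
  have hvecMulVec (x y : d → ℂ) : Φ (vecMulVec x (star y)) = 0 := by
    have := congrArg Φ (vecMulVec_star_polarization x y)
    rw [map_smul, map_sub, map_add, map_sub, map_smul, map_smul, hpure, hpure, hpure, hpure] at this
    simpa using this
  apply Matrix.ext_linearMap
  intro i j
  ext
  simpa [single_eq_single_vecMulVec_single, ← Pi.single_star] using
    hvecMulVec (Pi.single i 1) (Pi.single j 1)

section

variable {n m : Type} [Fintype n] [DecidableEq n] [Fintype m] [DecidableEq m]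

omit [Fintype m] [DecidableEq n] [DecidableEq m] in
lemma ptrace1_zero : ptrace1 (0 : Matrix (n × m) (n × m) ℂ) = 0 := by
  ext k l
  simp [ptrace1]

omit [Fintype m] [DecidableEq n] [DecidableEq m] in
lemma ptrace1_add (A B : Matrix (n × m) (n × m) ℂ) :
    ptrace1 (A + B) = ptrace1 A + ptrace1 B := by
  ext k l
  simp [ptrace1, Finset.sum_add_distrib]

omit [Fintype m] [DecidableEq n] [DecidableEq m] in
lemma ptrace1_smul (c : ℂ) (A : Matrix (n × m) (n × m) ℂ) :
    ptrace1 (c • A) = c • ptrace1 A := by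
  ext k l
  simp [ptrace1, Finset.mul_sum]

/-- Condition (MC) for the two-outcome measurement `{P, 1 - P}`. -/
def IsNoSignalling (U : Matrix (n × m) (n × m) ℂ) (P : Matrix n n ℂ) : Prop :=
  ∀ ρ : Matrix (n × m) (n × m) ℂ, IsDensityMatrix ρ →
    ptrace1 (U * (P ⊗ₖ (1 : Matrix m m ℂ)) * ρ * (P ⊗ₖ (1 : Matrix m m ℂ)) * Uᴴ +
        U * ((1 - P) ⊗ₖ (1 : Matrix m m ℂ)) * ρ * ((1 - P) ⊗ₖ (1 : Matrix m m ℂ)) * Uᴴ)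
      = ptrace1 (U * ρ * Uᴴ)

def noSignallingDefect (U : Matrix (n × m) (n × m) ℂ) (P : Matrix n n ℂ) :
    Matrix (n × m) (n × m) ℂ →ₗ[ℂ] Matrix m m ℂ where
  toFun ρ := ptrace1 (U * ρ * Uᴴ) -
    ptrace1 (U * (P ⊗ₖ (1 : Matrix m m ℂ)) * ρ * (P ⊗ₖ (1 : Matrix m m ℂ)) * Uᴴ +
      U * ((1 - P) ⊗ₖ (1 : Matrix m m ℂ)) * ρ * ((1 - P) ⊗ₖ (1 : Matrix m m ℂ)) * Uᴴ)
  map_add' ρ σ := by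
    simp only [Matrix.mul_add, Matrix.add_mul, ptrace1_add]
    abel
  map_smul' c ρ := by
    simp only [Matrix.mul_smul, Matrix.smul_mul, ← smul_add, ptrace1_smul, RingHom.id_apply,
      smul_sub]

theorem IsNoSignalling.ptrace1_conj_kronecker_eq_zero {U : Matrix (n × m) (n × m) ℂ}
    {P E : Matrix n n ℂ} (hU : IsNoSignalling U P) (hPE : P * E = E) (hEP : E * P = 0)
    (F : Matrix m m ℂ) : ptrace1 (U * (E ⊗ₖ F) * Uᴴ) = 0 := by
  have hdefect : noSignallingDefect U P = 0 :=
    LinearMap.eq_zero_of_forall_isDensityMatrix _ fun ρ hρ => sub_eq_zero.mpr (hU ρ hρ).symm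
  have hP : (P ⊗ₖ (1 : Matrix m m ℂ)) * (E ⊗ₖ F) * (P ⊗ₖ (1 : Matrix m m ℂ)) = 0 := by
    rw [← mul_kronecker_mul, ← mul_kronecker_mul, hPE, hEP, zero_kronecker]
  have hP' :
      ((1 - P) ⊗ₖ (1 : Matrix m m ℂ)) * (E ⊗ₖ F) * ((1 - P) ⊗ₖ (1 : Matrix m m ℂ)) = 0 := by
    rw [← mul_kronecker_mul, ← mul_kronecker_mul, Matrix.sub_mul, hPE, Matrix.one_mul, sub_self,
      Matrix.zero_mul, zero_kronecker]
  have hconj (Q : Matrix (n × m) (n × m) ℂ) (hQ : Q * (E ⊗ₖ F) * Q = 0) :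
      U * Q * (E ⊗ₖ F) * Q * Uᴴ = 0 := by
    rw [Matrix.mul_assoc U, Matrix.mul_assoc U, hQ, Matrix.mul_zero, Matrix.zero_mul]
  have := LinearMap.congr_fun hdefect (E ⊗ₖ F)
  rwa [noSignallingDefect, LinearMap.coe_mk, AddHom.coe_mk, hconj _ hP, hconj _ hP', add_zero,
    ptrace1_zero, sub_zero] at this

theorem ptrace1_conj_vecMulVec_kronecker_eq_zero {U : Matrix (n × m) (n × m) ℂ}
    (hMC : ∀ P : Matrix n n ℂ, P.IsHermitian → P * P = P → P.rank = 1 → IsNoSignalling U P)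
    {e f : n → ℂ} (hfe : star f ⬝ᵥ e = 0) (F : Matrix m m ℂ) :
    ptrace1 (U * (vecMulVec e (star f) ⊗ₖ F) * Uᴴ) = 0 := by
  rcases eq_or_ne e 0 with rfl | he
  · simp [ptrace1_zero]
  exact (hMC _ (rankOneProj_posSemidef e).isHermitian (rankOneProj_mul_self he)
    (rank_rankOneProj he)).ptrace1_conj_kronecker_eq_zero (rankOneProj_mul_vecMulVec he _)
    (vecMulVec_mul_rankOneProj hfe _) F

omit [DecidableEq n] in
lemma ptrace1_conj_vecMulVec_kronecker_single_apply (U : Matrix (n × m) (n × m) ℂ)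
    (e f : n → ℂ) (k k' l l' : m) :
    ptrace1 (U * (vecMulVec e (star f) ⊗ₖ single l l' 1) * Uᴴ) k k' =
      star f ⬝ᵥ (((U.submatrix (·, k') (·, l'))ᴴ * U.submatrix (·, k) (·, l)) *ᵥ e) := by
  simp only [ptrace1, mul_apply, kroneckerMap_apply, vecMulVec_apply, Pi.star_apply,
    RCLike.star_def, single_apply, ite_and, mul_ite, mul_one, mul_zero, Fintype.sum_prod_type,
    Finset.sum_ite_eq, Finset.mem_univ, ↓reduceIte, Finset.sum_ite_irrel, Finset.sum_const_zero,
    conjTranspose_apply, ite_mul, Finset.sum_mul, zero_mul, of_apply, dotProduct, mulVec,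
    conjTranspose_submatrix, submatrix_apply, Finset.mul_sum]
  rw [Finset.sum_comm]
  refine Finset.sum_congr rfl fun q _ => ?_
  rw [Finset.sum_comm]
  exact Finset.sum_congr rfl fun p _ => Finset.sum_congr rfl fun i _ => by ring

end

section

variable {n m : Type} [Fintype n] [DecidableEq n] [Fintype m] [DecidableEq m]

lemma Matrix.exists_eq_smul_one_of_orthogonal_mulVec {M : Matrix n n ℂ}
    (h : ∀ e f : n → ℂ, star f ⬝ᵥ e = 0 → star f ⬝ᵥ (M *ᵥ e) = 0) : ∃ c : ℂ, M = c • 1 := by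
  have hoff {p q : n} (hpq : p ≠ q) : M q p = 0 := by
    simpa [hpq.symm] using h (Pi.single p 1) (Pi.single q 1) (by simp [hpq.symm])
  have hdiag (p q : n) : M p p = M q q := by
    rcases eq_or_ne p q with rfl | hpq
    · rfl
    have := h (Pi.single p 1 + Pi.single q 1) (Pi.single p 1 - Pi.single q 1)
      (by simp [hpq, hpq.symm])
    simp only [star_sub, Pi.star_single, star_one, mulVec_add, mulVec_single, MulOpposite.op_one,
      one_smul, dotProduct_add, sub_dotProduct, single_dotProduct, col_apply, one_mul, hoff hpq,
      mul_zero, sub_zero, hoff hpq.symm, zero_sub] at this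
    linear_combination this
  rcases isEmpty_or_nonempty n with hn | ⟨⟨p₀⟩⟩
  · exact ⟨0, Subsingleton.elim _ _⟩
  refine ⟨M p₀ p₀, ext fun p q => ?_⟩
  rcases eq_or_ne p q with rfl | hpq
  · simp [hdiag p p₀]
  · simp [hoff hpq.symm, hpq]

lemma Matrix.exists_smul_mem_unitaryGroup {A : Matrix n n ℂ} {c : ℂ} (hA : Aᴴ * A = c • 1)
    (hA0 : A ≠ 0) : ∃ s : ℂ, s • A ∈ unitaryGroup n ℂ := by
  obtain ⟨p, hp⟩ : ∃ p, Aᵀ p ≠ 0 := by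
    by_contra! h
    exact hA0 (by simpa using congrArg transpose (funext h : Aᵀ = 0))
  have hc : c = star (Aᵀ p) ⬝ᵥ Aᵀ p := by
    simpa [mul_apply, dotProduct] using (congrFun (congrFun hA p) p).symm
  obtain ⟨r, hr, rfl⟩ : ∃ r : ℝ, 0 < r ∧ (r : ℂ) = c :=
    RCLike.pos_iff_exists_ofReal.mp (hc ▸ dotProduct_star_self_pos_iff.mpr hp)
  refine ⟨((Real.sqrt r)⁻¹ : ℝ), ?_⟩
  rw [mem_unitaryGroup_iff', star_eq_conjTranspose, conjTranspose_smul, smul_mul_smul_comm, hA,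
    smul_smul, Complex.star_def, Complex.conj_ofReal, ← Complex.ofReal_mul, ← Complex.ofReal_mul,
    ← mul_inv, Real.mul_self_sqrt hr.le, inv_mul_cancel₀ hr.ne', Complex.ofReal_one, one_smul]

theorem Matrix.mem_unitaryGroup_of_kronecker [Nonempty n] {A : Matrix n n ℂ} {B : Matrix m m ℂ}
    (hAB : A ⊗ₖ B ∈ unitaryGroup (n × m) ℂ) (hA : A ∈ unitaryGroup n ℂ) :
    B ∈ unitaryGroup m ℂ := by
  rw [mem_unitaryGroup_iff', star_eq_conjTranspose] at *
  rw [conjTranspose_kronecker, ← mul_kronecker_mul, hA] at hAB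
  obtain ⟨p⟩ := ‹Nonempty n›
  ext l l'
  simpa [one_apply] using congrFun (congrFun hAB (p, l)) (p, l')

theorem Matrix.exists_unitary_kronecker_of_block_conjTranspose_mul_eq_smul_one
    {U : Matrix (n × m) (n × m) ℂ} (hU : U ∈ unitaryGroup (n × m) ℂ)
    (hblock : ∀ k l k' l' : m, ∃ c : ℂ,
      (U.submatrix (·, k') (·, l'))ᴴ * U.submatrix (·, k) (·, l) = c • 1) :
    ∃ U₁ U₂, U₁ ∈ unitaryGroup n ℂ ∧ U₂ ∈ unitaryGroup m ℂ ∧ U = U₁ ⊗ₖ U₂ := by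
  by_cases hzero : ∀ k l, U.submatrix (·, k) (·, l) = 0
  · have hU0 : U = 0 := by
      ext ⟨i, k⟩ ⟨p, l⟩
      exact congrFun (congrFun (hzero k l) i) p
    have h10 : (1 : Matrix (n × m) (n × m) ℂ) = 0 := by
      rw [← mem_unitaryGroup_iff'.mp hU, hU0, mul_zero]
    exact ⟨1, 1, one_mem _, one_mem _, by rw [one_kronecker_one, hU0, h10]⟩
  push Not at hzero
  obtain ⟨k₀, l₀, hB₀⟩ := hzero
  have : Nonempty n := by
    by_contra! hn
    exact hB₀ (Subsingleton.elim _ _)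
  obtain ⟨c₀, hc₀⟩ := hblock k₀ l₀ k₀ l₀
  obtain ⟨s, hW⟩ := exists_smul_mem_unitaryGroup hc₀ hB₀
  set W := s • U.submatrix (·, k₀) (·, l₀)
  choose c hc using fun k l => hblock k l k₀ l₀
  have hblock_eq (k l : m) : U.submatrix (·, k) (·, l) = (star s * c k l) • W := calc
    U.submatrix (·, k) (·, l) = W * (Wᴴ * U.submatrix (·, k) (·, l)) := by
      rw [← Matrix.mul_assoc, ← star_eq_conjTranspose, mem_unitaryGroup_iff.mp hW, Matrix.one_mul]
    _ = W * ((star s * c k l) • 1) := by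
      congr 1
      rw [conjTranspose_smul, Matrix.smul_mul, hc, smul_smul]
    _ = (star s * c k l) • W := by
      rw [Matrix.mul_smul, Matrix.mul_one]
  have hUW : U = W ⊗ₖ of fun k l => star s * c k l := by
    ext ⟨i, k⟩ ⟨p, l⟩
    rw [kroneckerMap_apply, of_apply, mul_comm]
    exact congrFun (congrFun (hblock_eq k l) i) p
  exact ⟨W, _, hW, mem_unitaryGroup_of_kronecker (hUW ▸ hU) hW, hUW⟩

end

/-- Strengthened factorization theorem: it suffices that the no-signalling condition (MC)
holds for all two-outcome measurements `{P, 1 − P}` with `P` a rank-one projection. -/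
theorem MC_rank_one_implies_factorization
    (n m : Type) [Fintype n] [DecidableEq n] [Fintype m] [DecidableEq m]
    (U : Matrix (n × m) (n × m) ℂ) (hU : U ∈ Matrix.unitaryGroup (n × m) ℂ)
    (hMC : ∀ P : Matrix n n ℂ, P.IsHermitian → P * P = P → P.rank = 1 →
      ∀ ρ : Matrix (n × m) (n × m) ℂ, IsDensityMatrix ρ →
        ptrace1 (U * (P ⊗ₖ (1 : Matrix m m ℂ)) * ρ * (P ⊗ₖ (1 : Matrix m m ℂ)) * Uᴴ +
            U * ((1 - P) ⊗ₖ (1 : Matrix m m ℂ)) * ρ *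
              ((1 - P) ⊗ₖ (1 : Matrix m m ℂ)) * Uᴴ)
          = ptrace1 (U * ρ * Uᴴ)) :
    ∃ U₁ U₂, U₁ ∈ Matrix.unitaryGroup n ℂ ∧ U₂ ∈ Matrix.unitaryGroup m ℂ ∧
      U = U₁ ⊗ₖ U₂ := by
  refine exists_unitary_kronecker_of_block_conjTranspose_mul_eq_smul_one hU fun k l k' l' =>
    exists_eq_smul_one_of_orthogonal_mulVec fun e f hfe => ?_
  rw [← ptrace1_conj_vecMulVec_kronecker_single_apply,
    ptrace1_conj_vecMulVec_kronecker_eq_zero hMC hfe, Matrix.zero_apply]
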